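/- Let k ≥ 1 and ℓ ≥ 0 be integers. A hypergraph G = (V,E) is (k,ℓ)-sparse if and only if G has a (k,ℓ)-pebble game construction, i.e., there is a reachable configuration (E', t, peb) of the (k,ℓ)-pebble game on V whose underlying edge multiset E' equals E. -/

import Mathlib

/-!
In a reachable configuration every vertex satisfies `peb u + outdeg u = k`, and an edge spanned
by `W` has its tail in `W`; so the pebbles on `W` number at most `k|W|` minus the edges spanned
by `W`. An edge can only be added onto `W` if `W` carries `ℓ + 1` pebbles, hence the game
preserves sparsity.

Conversely, insert the edges of a sparse `E` one at a time. While the new edge `e` carries at most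
`ℓ` pebbles, let `R` be the set of vertices from which a pebble can be shifted into `e`. Every
edge with tail in `R` lies inside `R`, so the pebbles on `R` number exactly `k|R|` minus the edges
of the configuration spanned by `R`; since `R` also spans `e`, sparsity of `E` makes this more
than `ℓ`. Some pebble therefore lies on `R \ e`, and shifting it along a shortest route brings it
onto `e` without changing the underlying edges.
-/

/-- The number of edges of the multiset `E` spanned by the vertex set `W`. -/
def spanCount {V : Type*} [DecidableEq V] (E : Multiset (Finset V)) (W : Finset V) : ℕ :=
  (E.filter fun e => e ⊆ W).card

/-- A hypergraph with edge multiset `E` is `(k,ℓ)`-sparse if every vertex subset spanning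
at least one edge spans at most `k|W| - ℓ` edges. -/
def Sparse {V : Type*} [DecidableEq V] (k l : ℕ) (E : Multiset (Finset V)) : Prop :=
  ∀ W : Finset V, 1 ≤ spanCount E W → spanCount E W + l ≤ k * W.card

/-- Reachable configurations of the `(k,ℓ)`-pebble game on the vertex type `V`.
A configuration is a multiset `D` of oriented edges (an edge together with its tail)
and a pebble function `peb`.  The initial configuration has no edges and `k` pebbles on
each vertex.  The moves are the add-edge move (an edge with at least `ℓ+1` pebbles on its
ends may be added, picking up a pebble from its chosen tail) and the pebble-shift move
(a pebble on an end `v` of an edge with tail `w` may be moved to `w`, making `v` the new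
tail). -/
inductive PebbleReach {V : Type*} [DecidableEq V] (k l : ℕ) :
    Multiset (Finset V × V) → (V → ℕ) → Prop
  | init : PebbleReach k l 0 (fun _ => k)
  | addEdge {D : Multiset (Finset V × V)} {peb : V → ℕ} (e : Finset V) (v : V) :
      PebbleReach k l D peb → e.Nonempty → v ∈ e →
      l + 1 ≤ ∑ u ∈ e, peb u → 1 ≤ peb v →
      PebbleReach k l ((e, v) ::ₘ D) (Function.update peb v (peb v - 1))
  | shift {D : Multiset (Finset V × V)} {peb : V → ℕ} (e : Finset V) (w v : V) :
      PebbleReach k l D peb → (e, w) ∈ D → v ∈ e → 1 ≤ peb v →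
      PebbleReach k l ((e, v) ::ₘ D.erase (e, w))
        (Function.update (Function.update peb v (peb v - 1)) w
          (Function.update peb v (peb v - 1) w + 1))

open Function

section Counting

theorem Multiset.countP_mono_left {α : Type*} {p q : α → Prop} [DecidablePred p]
    [DecidablePred q] {s : Multiset α} (h : ∀ a ∈ s, p a → q a) :
    s.countP p ≤ s.countP q := by
  induction s using Multiset.induction_on with
  | empty => simp
  | cons a s ih =>
    simp only [Multiset.countP_cons]
    have hs := ih fun b hb => h b (Multiset.mem_cons_of_mem hb)
    have ha := h a (Multiset.mem_cons_self a s)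
    split_ifs with hp hq hq
    · omega
    · exact absurd (ha hp) hq
    all_goals omega

theorem Multiset.sum_countP_eq_countP_mem {α β : Type*} [DecidableEq β] (f : α → β)
    (s : Multiset α) (W : Finset β) :
    ∑ u ∈ W, s.countP (fun a => f a = u) = s.countP (fun a => f a ∈ W) := by
  induction s using Multiset.induction_on with
  | empty => simp
  | cons a s ih =>
    simp only [Multiset.countP_cons, Finset.sum_add_distrib, ih, Finset.sum_ite_eq]

theorem Multiset.map_fst_cons_erase {α β : Type*} [DecidableEq α] [DecidableEq β]
    {D : Multiset (α × β)} {e : α} {w : β} (v : β) (h : (e, w) ∈ D) :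
    ((e, v) ::ₘ D.erase (e, w)).map Prod.fst = D.map Prod.fst := by
  conv_rhs => rw [← Multiset.cons_erase h]
  simp

variable {V : Type*} [DecidableEq V]

theorem spanCount_cons (e : Finset V) (E : Multiset (Finset V)) (W : Finset V) :
    spanCount (e ::ₘ E) W = spanCount E W + if e ⊆ W then 1 else 0 := by
  simp only [spanCount, ← Multiset.countP_eq_card_filter, Multiset.countP_cons]

theorem spanCount_mono {E E' : Multiset (Finset V)} (h : E ≤ E') (W : Finset V) :
    spanCount E W ≤ spanCount E' W :=
  Multiset.card_le_card (Multiset.filter_le_filter _ h)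

theorem spanCount_map_fst (D : Multiset (Finset V × V)) (W : Finset V) :
    spanCount (D.map Prod.fst) W = D.countP fun p => p.1 ⊆ W := by
  rw [spanCount, ← Multiset.countP_eq_card_filter, Multiset.countP_map,
    ← Multiset.countP_eq_card_filter]

theorem update_shift_apply_add {peb : V → ℕ} {v : V} (w : V) (hpv : 1 ≤ peb v) (u : V) :
    update (update peb v (peb v - 1)) w (update peb v (peb v - 1) w + 1) u +
      (if u = v then 1 else 0) = peb u + if u = w then 1 else 0 := by
  by_cases huv : u = v <;> by_cases huw : u = w <;> subst_vars <;> simp [update_apply, *]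

end Counting

namespace PebbleReach

variable {V : Type*} [DecidableEq V] {k l : ℕ} {D : Multiset (Finset V × V)} {peb : V → ℕ}

theorem tail_mem (h : PebbleReach k l D peb) : ∀ p ∈ D, p.2 ∈ p.1 := by
  induction h with
  | init => simp
  | addEdge e v _ _ hv _ _ ih =>
    rintro p hp
    rcases Multiset.mem_cons.1 hp with rfl | hp
    exacts [hv, ih p hp]
  | shift e w v _ _ hv _ ih =>
    rintro p hp
    rcases Multiset.mem_cons.1 hp with rfl | hp
    exacts [hv, ih p (Multiset.mem_of_mem_erase hp)]

theorem peb_add_countP_tail_eq (h : PebbleReach k l D peb) (u : V) :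
    peb u + D.countP (fun p => p.2 = u) = k := by
  induction h with
  | init => simp
  | addEdge e v _ _ _ _ hpv ih =>
    rw [Multiset.countP_cons, update_apply]
    by_cases huv : u = v
    · subst huv
      simp only [if_true]
      omega
    · simp only [huv, Ne.symm huv, if_false]
      omega
  | @shift D peb e w v _ hmem _ hpv ih =>
    rw [← Multiset.cons_erase hmem, Multiset.countP_cons] at ih
    have hpeb := update_shift_apply_add w hpv u
    rw [Multiset.countP_cons]
    simp only [eq_comm (b := u)] at ih ⊢
    omega

theorem sum_peb_add_countP_tail_mem (h : PebbleReach k l D peb) (W : Finset V) :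
    ∑ u ∈ W, peb u + D.countP (fun p => p.2 ∈ W) = k * W.card := by
  rw [← Multiset.sum_countP_eq_countP_mem, ← Finset.sum_add_distrib,
    Finset.sum_congr rfl fun u _ => h.peb_add_countP_tail_eq u, Finset.sum_const, smul_eq_mul,
    mul_comm]

theorem spanCount_add_sum_peb_le (h : PebbleReach k l D peb) (W : Finset V) :
    spanCount (D.map Prod.fst) W + ∑ u ∈ W, peb u ≤ k * W.card := by
  have hspan : D.countP (fun p => p.1 ⊆ W) ≤ D.countP (fun p => p.2 ∈ W) :=
    Multiset.countP_mono_left fun p hp hsub => hsub (h.tail_mem p hp)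
  have := h.sum_peb_add_countP_tail_mem W
  rw [spanCount_map_fst]
  omega

theorem sparse (h : PebbleReach k l D peb) : Sparse k l (D.map Prod.fst) := by
  induction h with
  | init => simp [Sparse, spanCount]
  | @addEdge D peb e v h _ _ hsum _ ih =>
    intro W hW
    rw [Multiset.map_cons, spanCount_cons] at hW ⊢
    by_cases he : e ⊆ W
    · have hW' := h.spanCount_add_sum_peb_le W
      have := Finset.sum_le_sum_of_subset (f := peb) he
      simp only [he, if_true]
      omega
    · simp only [he, if_false, add_zero] at hW ⊢
      exact ih W hW
  | shift e w v _ hmem _ _ ih =>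
    rwa [Multiset.map_fst_cons_erase v hmem]

end PebbleReach

section Routing

variable {V : Type*}

/-- A pebble on `v` can be brought into `S` by at most `n` pebble shifts: a shift along an edge
containing `v` moves the pebble to the edge's tail. -/
def ShiftsInto (D : Multiset (Finset V × V)) (S : Finset V) : ℕ → V → Prop
  | 0, v => v ∈ S
  | n + 1, v => v ∈ S ∨ ∃ p ∈ D, v ∈ p.1 ∧ ShiftsInto D S n p.2

variable {D D' : Multiset (Finset V × V)} {S : Finset V}

theorem ShiftsInto.mono (hD : ∀ p ∈ D, p ∈ D') :
    ∀ {n : ℕ} {v : V}, ShiftsInto D S n v → ShiftsInto D' S n v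
  | 0, _, hv => hv
  | _ + 1, _, .inl hv => .inl hv
  | _ + 1, _, .inr ⟨p, hp, hvp, hr⟩ => .inr ⟨p, hD p hp, hvp, hr.mono hD⟩

variable [DecidableEq V]

/-- A route of minimal length from `w` cannot pass through `w` again, so it survives the loss of
an edge with tail `w`. -/
theorem ShiftsInto.erase_of_minimal {e : Finset V} {w : V} :
    ∀ {n : ℕ}, (∀ j, ShiftsInto D S j w → n ≤ j) →
      ∀ {v : V}, ShiftsInto D S n v → ShiftsInto (D.erase (e, w)) S n v
  | 0, _, _, hv => hv
  | _ + 1, _, _, .inl hv => .inl hv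
  | n + 1, hmin, _, .inr ⟨p, hp, hvp, hr⟩ => by
    have hpe : p ≠ (e, w) := by
      rintro rfl
      exact absurd (hmin n hr) (by omega)
    exact .inr ⟨p, (Multiset.mem_erase_of_ne hpe).2 hp, hvp,
      hr.erase_of_minimal fun j hj => Nat.le_of_succ_le (hmin j hj)⟩

theorem ShiftsInto.exists_first_shift {n : ℕ} {v : V} (hv : ShiftsInto D S n v) (hvS : v ∉ S) :
    ∃ e w m, (e, w) ∈ D ∧ v ∈ e ∧ m < n ∧ ShiftsInto (D.erase (e, w)) S m w := by
  classical
  have hex : ∃ j, ShiftsInto D S j v := ⟨n, hv⟩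
  have hfind_le : Nat.find hex ≤ n := Nat.find_min' hex hv
  obtain ⟨m, hm⟩ : ∃ m, Nat.find hex = m + 1 := by
    refine Nat.exists_eq_succ_of_ne_zero fun h0 => hvS ?_
    simpa [h0, ShiftsInto] using Nat.find_spec hex
  have hfind := Nat.find_spec hex
  rw [hm] at hfind
  obtain hvS' | ⟨⟨e, w⟩, hp, hvp, hw⟩ := hfind
  · exact absurd hvS' hvS
  have hexw : ∃ j, ShiftsInto D S j w := ⟨m, hw⟩
  have hfindw_le : Nat.find hexw ≤ m := Nat.find_min' hexw hw
  exact ⟨e, w, Nat.find hexw, hp, hvp, by omega,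
    (Nat.find_spec hexw).erase_of_minimal fun j hj => Nat.find_min' hexw hj⟩

open Classical in
noncomputable def shiftBasin (D : Multiset (Finset V × V)) (S : Finset V) : Finset V :=
  (S ∪ D.toFinset.biUnion Prod.fst).filter fun v => ∃ n, ShiftsInto D S n v

open Classical in
theorem mem_shiftBasin {v : V} :
    v ∈ shiftBasin D S ↔ v ∈ S ∪ D.toFinset.biUnion Prod.fst ∧ ∃ n, ShiftsInto D S n v :=
  Finset.mem_filter

theorem subset_shiftBasin : S ⊆ shiftBasin D S := fun _ hv =>
  mem_shiftBasin.2 ⟨Finset.mem_union_left _ hv, 0, hv⟩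

theorem exists_shiftsInto_of_mem_shiftBasin {v : V} (hv : v ∈ shiftBasin D S) :
    ∃ n, ShiftsInto D S n v :=
  (mem_shiftBasin.1 hv).2

theorem fst_subset_shiftBasin {p : Finset V × V} (hp : p ∈ D) (ht : p.2 ∈ shiftBasin D S) :
    p.1 ⊆ shiftBasin D S := fun x hx => by
  obtain ⟨n, hn⟩ := exists_shiftsInto_of_mem_shiftBasin ht
  exact mem_shiftBasin.2 ⟨Finset.mem_union_right _
    (Finset.mem_biUnion.2 ⟨p, Multiset.mem_toFinset.2 hp, hx⟩), n + 1, .inr ⟨p, hp, hx, hn⟩⟩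

end Routing

namespace PebbleReach

variable {V : Type*} [DecidableEq V] {k l : ℕ} {D : Multiset (Finset V × V)} {peb : V → ℕ}

theorem exists_sum_succ_of_shiftsInto {S : Finset V} {n : ℕ} {v : V}
    (h : PebbleReach k l D peb) (hv : ShiftsInto D S n v) (hvS : v ∉ S) (hpv : 1 ≤ peb v) :
    ∃ D' peb', PebbleReach k l D' peb' ∧ D'.map Prod.fst = D.map Prod.fst ∧
      ∑ u ∈ S, peb' u = ∑ u ∈ S, peb u + 1 := by
  induction n using Nat.strong_induction_on generalizing D peb v with
  | _ n ih =>
  obtain ⟨e, w, m, hmem, hve, hmn, hw⟩ := hv.exists_first_shift hvS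
  have h₁ := h.shift e w v hmem hve hpv
  have hfst₁ := Multiset.map_fst_cons_erase v hmem
  have hsum₁ : ∑ u ∈ S, update (update peb v (peb v - 1)) w
      (update peb v (peb v - 1) w + 1) u = ∑ u ∈ S, peb u + if w ∈ S then 1 else 0 := by
    rw [← Finset.sum_ite_eq' S w fun _ => 1, ← Finset.sum_add_distrib]
    refine Finset.sum_congr rfl fun u hu => ?_
    simpa [ne_of_mem_of_not_mem hu hvS] using update_shift_apply_add w hpv u
  by_cases hwS : w ∈ S
  · exact ⟨_, _, h₁, hfst₁, by simpa [hwS] using hsum₁⟩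
  · obtain ⟨D', peb', h', hfst', hsum'⟩ :=
      ih m hmn h₁ (hw.mono fun p hp => Multiset.mem_cons_of_mem hp) hwS (by simp)
    exact ⟨D', peb', h', hfst'.trans hfst₁, by simp_all⟩

variable {E : Multiset (Finset V)} {e : Finset V}

theorem exists_sum_succ_of_sparse (hE : Sparse k l E) (h : PebbleReach k l D peb)
    (hDe : e ::ₘ D.map Prod.fst ≤ E) (hle : ∑ u ∈ e, peb u ≤ l) :
    ∃ D' peb', PebbleReach k l D' peb' ∧ D'.map Prod.fst = D.map Prod.fst ∧
      ∑ u ∈ e, peb' u = ∑ u ∈ e, peb u + 1 := by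
  set R := shiftBasin D e
  have heR : e ⊆ R := subset_shiftBasin
  have htail : D.countP (fun p => p.2 ∈ R) ≤ spanCount (D.map Prod.fst) R := by
    rw [spanCount_map_fst]
    exact Multiset.countP_mono_left fun p hp ht => fst_subset_shiftBasin hp ht
  have hspan : spanCount (D.map Prod.fst) R + 1 ≤ spanCount E R := by
    simpa [spanCount_cons, heR] using spanCount_mono hDe R
  have hsparse := hE R (by omega)
  have hcount := h.sum_peb_add_countP_tail_mem R
  have hsplit := Finset.sum_sdiff (f := peb) heR
  obtain ⟨v, hvRe, hpv⟩ := Finset.exists_ne_zero_of_sum_ne_zero (s := R \ e) (f := peb) (by omega)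
  obtain ⟨n, hn⟩ := exists_shiftsInto_of_mem_shiftBasin (Finset.mem_sdiff.1 hvRe).1
  exact h.exists_sum_succ_of_shiftsInto hn (Finset.mem_sdiff.1 hvRe).2 (Nat.pos_of_ne_zero hpv)

theorem exists_le_sum_of_sparse (hE : Sparse k l E) (h : PebbleReach k l D peb)
    (hDe : e ::ₘ D.map Prod.fst ≤ E) :
    ∃ D' peb', PebbleReach k l D' peb' ∧ D'.map Prod.fst = D.map Prod.fst ∧
      l + 1 ≤ ∑ u ∈ e, peb' u := by
  obtain ⟨t, ht⟩ : ∃ t, l + 1 ≤ ∑ u ∈ e, peb u + t := ⟨l + 1, by omega⟩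
  induction t generalizing D peb with
  | zero => exact ⟨D, peb, h, rfl, ht⟩
  | succ t ih =>
    by_cases hdone : l + 1 ≤ ∑ u ∈ e, peb u
    · exact ⟨D, peb, h, rfl, hdone⟩
    obtain ⟨D₁, peb₁, h₁, hfst₁, hsum₁⟩ := exists_sum_succ_of_sparse hE h hDe (by omega)
    obtain ⟨D', peb', h', hfst', hsum'⟩ := ih h₁ (hfst₁ ▸ hDe) (by omega)
    exact ⟨D', peb', h', hfst'.trans hfst₁, hsum'⟩

end PebbleReach

theorem Sparse.exists_pebbleReach {V : Type*} [DecidableEq V] {k l : ℕ}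
    {E : Multiset (Finset V)} (hE : Sparse k l E) :
    ∀ F ≤ E, ∃ D peb, PebbleReach k l D peb ∧ D.map Prod.fst = F := by
  intro F
  induction F using Multiset.induction_on with
  | empty => exact fun _ => ⟨0, _, .init, rfl⟩
  | cons e F ih =>
    intro hFE
    obtain ⟨D, peb, h, rfl⟩ := ih ((Multiset.le_cons_self _ _).trans hFE)
    obtain ⟨D', peb', h', hfst', hsum⟩ := h.exists_le_sum_of_sparse hE hFE
    obtain ⟨v, hv, hpv⟩ := Finset.exists_ne_zero_of_sum_ne_zero (s := e) (f := peb') (by omega)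
    exact ⟨_, _, h'.addEdge e v ⟨v, hv⟩ hv hsum (Nat.pos_of_ne_zero hpv),
      by rw [Multiset.map_cons, hfst']⟩

theorem stmt_17_general {V : Type*} [DecidableEq V] (k l : ℕ)
    (E : Multiset (Finset V)) :
    Sparse k l E ↔
      ∃ (D : Multiset (Finset V × V)) (peb : V → ℕ),
        PebbleReach k l D peb ∧ D.map Prod.fst = E := by
  refine ⟨fun hE => hE.exists_pebbleReach E le_rfl, ?_⟩
  rintro ⟨D, peb, h, rfl⟩
  exact h.sparse

/-- Main theorem: a hypergraph is `(k,ℓ)`-sparse iff it has a `(k,ℓ)`-pebble game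
construction, i.e. some reachable configuration has underlying edge multiset `E`. -/
theorem stmt_17 {V : Type*} [DecidableEq V] (k l : ℕ) (hk : 1 ≤ k)
    (E : Multiset (Finset V)) (hne : ∀ e ∈ E, e.Nonempty) :
    Sparse k l E ↔
      ∃ (D : Multiset (Finset V × V)) (peb : V → ℕ),
        PebbleReach k l D peb ∧ D.map Prod.fst = E :=
  stmt_17_general k l E
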